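/- Let B be an annihilator nilpotent skew brace, let A be a skew brace, let f : A → B be a skew brace homomorphism, and let f̄ : A/A² → B/B² be the induced skew brace homomorphism on the quotients by A² = A*A and B² = B*B. Then f is surjective if and only if f̄ is surjective. -/
import Mathlib


/-- A skew brace: a type with two group structures `(B,+)` and `(B,∘)`
(the multiplicative group is written with `*`) sharing the same underlying set,
such that `a ∘ (b + c) = a ∘ b - a + a ∘ c`. -/
class SkewBrace (B : Type*) extends AddGroup B, Group B where
  circ_add : ∀ a b c : B, a * (b + c) = a * b - a + a * c

namespace SkewBrace

variable {B : Type*} [SkewBrace B]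

/-- `lam a b = -a + a ∘ b`, i.e. `λ_a(b)`. -/
def lam (a b : B) : B := -a + a * b

/-- `a * b` (the star operation) `= λ_a(b) - b = -a + a ∘ b - b`. -/
def starOp (a b : B) : B := -a + a * b - b

/-- `X * Y` : the additive subgroup generated by all `x * y`, `x ∈ X`, `y ∈ Y`,
regarded as a set. -/
def starSpan (X Y : Set B) : Set B :=
  (AddSubgroup.closure {z : B | ∃ x ∈ X, ∃ y ∈ Y, z = starOp x y} : AddSubgroup B)

/-- `[X,Y]₊` : the additive subgroup generated by all additive commutators
`x + y - x - y`, `x ∈ X`, `y ∈ Y`, regarded as a set. -/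
def addCommSpan (X Y : Set B) : Set B :=
  (AddSubgroup.closure {z : B | ∃ x ∈ X, ∃ y ∈ Y, z = x + y - x - y} : AddSubgroup B)

/-- A sub skew brace: a subset containing `0` and closed under both group
operations and both inverses. -/
def IsSubSkewBrace (S : Set B) : Prop :=
  0 ∈ S ∧ (∀ a ∈ S, ∀ b ∈ S, a + b ∈ S) ∧ (∀ a ∈ S, -a ∈ S) ∧
    (∀ a ∈ S, ∀ b ∈ S, a * b ∈ S) ∧ (∀ a ∈ S, a⁻¹ ∈ S)

/-- An ideal: a sub skew brace that is normal in `(B,+)` and in `(B,∘)` and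
invariant under all `λ_a`. -/
def IsIdeal (S : Set B) : Prop :=
  IsSubSkewBrace S ∧ (∀ a : B, ∀ i ∈ S, a + i - a ∈ S) ∧
    (∀ a : B, ∀ i ∈ S, a * i * a⁻¹ ∈ S) ∧ (∀ a : B, ∀ i ∈ S, lam a i ∈ S)

/-- The annihilator `Ann(B) = {x | x∘a = a∘x = x+a = a+x for all a}`. -/
def annSet (B : Type*) [SkewBrace B] : Set B :=
  {x | ∀ a : B, x * a = a * x ∧ x * a = x + a ∧ x + a = a + x}

/-- The annihilator series: `Ann₀(B) = 0` and `Ann_{n+1}(B)` is the preimage of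
`Ann(B/Annₙ(B))` under the quotient map; membership is expressed via coset
equalities modulo `Annₙ(B)`. -/
def annSeries (B : Type*) [SkewBrace B] : ℕ → Set B
  | 0 => {0}
  | n + 1 => {x | ∀ a : B,
      x * a - a * x ∈ annSeries B n ∧
      x * a - (x + a) ∈ annSeries B n ∧
      (x + a) - (a + x) ∈ annSeries B n}

/-- `B` is annihilator nilpotent if `Annₙ(B) = B` for some `n`. -/
def AnnNilpotent (B : Type*) [SkewBrace B] : Prop :=
  ∃ n : ℕ, annSeries B n = Set.univ

/-- `leftPow B n` is `B^{n+1}`: `B¹ = B`, `B^{n+1} = B * Bⁿ`. -/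
def leftPow (B : Type*) [SkewBrace B] : ℕ → Set B
  | 0 => Set.univ
  | n + 1 => starSpan Set.univ (leftPow B n)

/-- `rightPow B n` is `B⁽ⁿ⁺¹⁾`: `B⁽¹⁾ = B`, `B⁽ⁿ⁺¹⁾ = B⁽ⁿ⁾ * B`. -/
def rightPow (B : Type*) [SkewBrace B] : ℕ → Set B
  | 0 => Set.univ
  | n + 1 => starSpan (rightPow B n) Set.univ

/-- `B` is left nilpotent if `Bⁿ = 0` for some `n ≥ 1`. -/
def LeftNilpotent (B : Type*) [SkewBrace B] : Prop :=
  ∃ n : ℕ, leftPow B n = ({0} : Set B)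

/-- `B` is right nilpotent if `B⁽ⁿ⁾ = 0` for some `n ≥ 1`. -/
def RightNilpotent (B : Type*) [SkewBrace B] : Prop :=
  ∃ n : ℕ, rightPow B n = ({0} : Set B)

/-- `strongPow B n` is `B^[n+1]`: `B^[1] = B`, and `B^[n+1]` is the additive
subgroup generated by `⋃_{i=1}^{n} B^[i] * B^[n+1-i]`. -/
def strongPow (B : Type*) [SkewBrace B] : ℕ → Set B
  | 0 => Set.univ
  | n + 1 => (AddSubgroup.closure (⋃ j : Fin (n + 1),
      {z : B | ∃ x ∈ strongPow B j.1, ∃ y ∈ strongPow B (n - j.1), z = starOp x y}) :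
        AddSubgroup B)
  decreasing_by
  · exact j.isLt
  · omega

/-- `B` is strongly nilpotent if `B^[n] = 0` for some `n ≥ 1`. -/
def StronglyNilpotent (B : Type*) [SkewBrace B] : Prop :=
  ∃ n : ℕ, strongPow B n = ({0} : Set B)

/-- `gammaAux B n` is `Γ_[n+1](B)`: `Γ_[1](B) = B` and, for `n ≥ 2`, `Γ_[n](B)` is
the additive subgroup generated by the sets `Γ_[i](B) * Γ_[n-i](B)` and
`[Γ_[i](B), Γ_[n-i](B)]₊` for `1 ≤ i ≤ n-1`. -/
def gammaAux (B : Type*) [SkewBrace B] : ℕ → Set B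
  | 0 => Set.univ
  | n + 1 => (AddSubgroup.closure (⋃ j : Fin (n + 1),
      {z : B | ∃ x ∈ gammaAux B j.1, ∃ y ∈ gammaAux B (n - j.1),
        z = starOp x y ∨ z = x + y - x - y}) : AddSubgroup B)
  decreasing_by
  · exact j.isLt
  · omega

/-- `Γ_[n](B)` for `n ≥ 1` (one-based indexing as in the paper). -/
def gammaBr (B : Type*) [SkewBrace B] (n : ℕ) : Set B := gammaAux B (n - 1)

/-- `B` is finitely generated as a skew brace: there is a finite subset whose
smallest containing sub skew brace is `B` itself. -/
def SBFinitelyGenerated (B : Type*) [SkewBrace B] : Prop :=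
  ∃ S : Set B, S.Finite ∧ ∀ T : Set B, IsSubSkewBrace T → S ⊆ T → T = Set.univ

/-- `B` satisfies the ascending chain condition on sub skew braces. -/
def ACCSubSkewBrace (B : Type*) [SkewBrace B] : Prop :=
  ∀ f : ℕ → Set B, (∀ n, IsSubSkewBrace (f n)) → (∀ n, f n ⊆ f (n + 1)) →
    ∃ N : ℕ, ∀ n, N ≤ n → f n = f N


section Aux

variable {B : Type*} [SkewBrace B]

lemma mul_zero'' (a : B) : a * 0 = a := by
  have h := circ_add a 0 0
  rw [add_zero] at h
  have h3 : a * 0 - a + a * 0 = 0 + a * 0 := by rw [zero_add, ← h]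
  have h4 := add_right_cancel h3
  exact sub_eq_zero.mp h4

lemma one_eq_zero : (1 : B) = 0 := by
  have := mul_zero'' (1 : B); rw [one_mul] at this; exact this.symm

lemma zero_mul'' (a : B) : 0 * a = a := by rw [← one_eq_zero, one_mul]

variable {z w : B}


lemma ann_comm (hz : z ∈ annSet B) (a : B) : z + a = a + z := (hz a).2.2

lemma ann_mul (hz : z ∈ annSet B) (a : B) : z * a = z + a := (hz a).2.1

lemma mul_ann (hz : z ∈ annSet B) (a : B) : a * z = a + z := by
  rw [← (hz a).1, ann_mul hz, ann_comm hz]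

lemma ann_zero : (0 : B) ∈ annSet B := fun a =>
  ⟨by rw [zero_mul'', mul_zero''], by rw [zero_mul'', zero_add], by rw [zero_add, add_zero]⟩

lemma ann_add (hz : z ∈ annSet B) (hw : w ∈ annSet B) : z + w ∈ annSet B := by
  intro a
  have e1 : (z + w) * a = z + (w + a) := by
    rw [← mul_ann hw z, mul_assoc, ann_mul hw a, ann_mul hz (w + a)]
  have e2 : a * (z + w) = a + z + w := by
    rw [← mul_ann hw z, ← mul_assoc, mul_ann hz a, mul_ann hw (a + z)]
  refine ⟨?_, ?_, ?_⟩
  · rw [e1, e2, ann_comm hw a, ← add_assoc, ann_comm hz a]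
  · rw [e1, add_assoc]
  · rw [add_assoc, ann_comm hw, ← add_assoc, ann_comm hz, add_assoc]

lemma ann_inv_eq (hz : z ∈ annSet B) : z⁻¹ = -z := by
  have h := ann_mul hz z⁻¹
  rw [mul_inv_cancel, one_eq_zero] at h
  exact (eq_neg_of_add_eq_zero_right h.symm)

lemma ann_neg (hz : z ∈ annSet B) : -z ∈ annSet B := by
  intro a
  have hc : -z + a = a + -z := by
    have h1 : z + (-z + a) = a := by rw [← add_assoc, add_neg_cancel, zero_add]
    have h2 : z + (a + -z) = a := by rw [← add_assoc, ann_comm hz a, add_assoc, add_neg_cancel, add_zero]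
    exact add_left_cancel (h1.trans h2.symm)
  have hm : -z * a = -z + a := by
    rw [← ann_inv_eq hz]
    have h1 : z * (z⁻¹ * a) = a := by rw [← mul_assoc, mul_inv_cancel, one_mul]
    have h2 : z * (z⁻¹ + a) = a := by
      rw [ann_mul hz, ann_inv_eq hz, ← add_assoc, add_neg_cancel, zero_add]
    exact mul_left_cancel (h1.trans h2.symm)
  have hmc : -z * a = a * -z := by
    rw [← ann_inv_eq hz]
    have h1 : z * (z⁻¹ * a) = a := by rw [← mul_assoc, mul_inv_cancel, one_mul]
    have h2 : z * (a * z⁻¹) = a := by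
      rw [← mul_assoc, (hz a).1, mul_assoc, mul_inv_cancel, mul_one]
    exact mul_left_cancel (h1.trans h2.symm)
  exact ⟨hmc, hm, hc⟩

end Aux

section Quot

variable {B : Type*} [SkewBrace B]

/-- The annihilator as an additive subgroup. -/
def annZ (B : Type*) [SkewBrace B] : AddSubgroup B where
  carrier := annSet B
  add_mem' := fun ha hb => ann_add ha hb
  zero_mem' := ann_zero
  neg_mem' := fun ha => ann_neg ha

instance annZ_normal : (annZ B).Normal := by
  constructor
  intro z hz g
  have : g + z + -g = z := by
    rw [← ann_comm hz g, add_assoc, add_neg_cancel, add_zero]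
  rw [this]; exact hz

lemma add_ann_mul (hz : z ∈ annSet B) (x a : B) : (x + z) * a = x * a + z := by
  rw [← mul_ann hz x, mul_assoc, (hz a).1, ← mul_assoc, mul_ann hz (x * a)]

lemma mul_add_ann (hz : z ∈ annSet B) (a x : B) : a * (x + z) = a * x + z := by
  rw [← mul_ann hz x, ← mul_assoc, mul_ann hz (a * x)]

lemma qmul_welldef {a a' b b' : B} (ha : -a + a' ∈ annSet B) (hb : -b + b' ∈ annSet B) :
    -(a * b) + a' * b' ∈ annSet B := by
  have ha' : a' = a + (-a + a') := by rw [← add_assoc, add_neg_cancel, zero_add]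
  have hb' : b' = b + (-b + b') := by rw [← add_assoc, add_neg_cancel, zero_add]
  have e : a' * b' = a * b + (-a + a') + (-b + b') := by
    conv_lhs => rw [ha', hb']
    rw [mul_add_ann hb, add_ann_mul ha]
  rw [e, add_assoc, ← add_assoc (-(a*b)), neg_add_cancel, zero_add]
  exact ann_add ha hb

lemma ann_inv (hz : z ∈ annSet B) : z⁻¹ ∈ annSet B := by
  rw [ann_inv_eq hz]; exact ann_neg hz

lemma qinv_welldef {a a' : B} (ha : -a + a' ∈ annSet B) :
    -(a⁻¹) + a'⁻¹ ∈ annSet B := by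
  have ha' : a' = a * (-a + a') := by
    rw [mul_ann ha, ← add_assoc, add_neg_cancel, zero_add]
  have e : a'⁻¹ = a⁻¹ + (-a + a')⁻¹ := by
    conv_lhs => rw [ha']
    rw [mul_inv_rev, ann_mul (ann_inv ha), ann_comm (ann_inv ha)]
  rw [e, ← add_assoc, neg_add_cancel, zero_add]
  exact ann_inv ha

instance quotSB (B : Type*) [SkewBrace B] : SkewBrace (B ⧸ annZ B) where
  __ := (inferInstance : AddGroup (B ⧸ annZ B))
  mul := Quotient.map₂' (· * ·) (by
    intro a a' ha b b' hb
    rw [QuotientAddGroup.leftRel_apply] at ha hb ⊢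
    exact qmul_welldef ha hb)
  one := ((0 : B) : B ⧸ annZ B)
  inv := Quotient.map' (·⁻¹) (by
    intro a a' ha
    rw [QuotientAddGroup.leftRel_apply] at ha ⊢
    exact qinv_welldef ha)
  mul_assoc := by
    intro a b c
    refine Quotient.inductionOn₃' a b c fun a b c => ?_
    exact congrArg (Quotient.mk'' ·) (mul_assoc a b c)
  one_mul := by
    intro a
    refine Quotient.inductionOn' a fun a => ?_
    exact congrArg (Quotient.mk'' ·) (zero_mul'' a)
  mul_one := by
    intro a
    refine Quotient.inductionOn' a fun a => ?_
    exact congrArg (Quotient.mk'' ·) (mul_zero'' a)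
  inv_mul_cancel := by
    intro a
    refine Quotient.inductionOn' a fun a => ?_
    have : a⁻¹ * a = 0 := by rw [inv_mul_cancel, one_eq_zero]
    exact congrArg (Quotient.mk'' ·) this
  circ_add := by
    intro a b c
    refine Quotient.inductionOn₃' a b c fun a b c => ?_
    show Quotient.mk'' (a * (b + c)) = Quotient.mk'' (a * b) - Quotient.mk'' a + Quotient.mk'' (a * c)
    rw [circ_add a b c]
    rfl

lemma qmk_mul (a b : B) : ((a * b : B) : B ⧸ annZ B) = (a : B ⧸ annZ B) * (b : B ⧸ annZ B) := rfl

lemma qmk_eq_iff {a b : B} : (a : B ⧸ annZ B) = (b : B ⧸ annZ B) ↔ -a + b ∈ annSet B :=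
  QuotientAddGroup.eq

lemma qmk_surjective : Function.Surjective ((↑) : B → B ⧸ annZ B) :=
  fun q => Quotient.inductionOn' q fun b => ⟨b, rfl⟩

end Quot

section Series

variable {B : Type*} [SkewBrace B]

lemma zero_mem_annSeries (n : ℕ) : (0 : B) ∈ annSeries B n := by
  induction n with
  | zero => rfl
  | succ n ih =>
    intro a
    refine ⟨?_, ?_, ?_⟩
    · rw [zero_mul'', mul_zero'', sub_self]; exact ih
    · rw [zero_mul'', zero_add, sub_self]; exact ih
    · rw [zero_add, add_zero, sub_self]; exact ih

lemma annSeries_one : annSeries B 1 = annSet B := by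
  ext x
  simp only [annSeries, Set.mem_singleton_iff, sub_eq_zero, annSet, Set.mem_setOf_eq]

lemma transfer (n : ℕ) (x : B) :
    ((x : B ⧸ annZ B) ∈ annSeries (B ⧸ annZ B) n) ↔ x ∈ annSeries B (n + 1) := by
  induction n generalizing x with
  | zero =>
    show (x : B ⧸ annZ B) ∈ ({0} : Set _) ↔ _
    rw [Set.mem_singleton_iff, show (0 : B ⧸ annZ B) = ((0 : B) : B ⧸ annZ B) from rfl,
      qmk_eq_iff, add_zero, annSeries_one]
    constructor
    · intro h; have := ann_neg h; rwa [neg_neg] at this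
    · exact ann_neg
  | succ n ih =>
    have hmk : ∀ u v : B, (u : B ⧸ annZ B) - (v : B ⧸ annZ B) = ((u - v : B) : B ⧸ annZ B) :=
      fun u v => (QuotientAddGroup.mk_sub _ u v).symm
    have hma : ∀ u v : B, (u : B ⧸ annZ B) + (v : B ⧸ annZ B) = ((u + v : B) : B ⧸ annZ B) :=
      fun u v => (QuotientAddGroup.mk_add _ u v).symm
    simp only [annSeries, Set.mem_setOf_eq]
    constructor
    · intro h a
      obtain ⟨h1, h2, h3⟩ := h (a : B ⧸ annZ B)
      rw [← qmk_mul, ← qmk_mul, hmk] at h1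
      rw [← qmk_mul, hma, hmk] at h2
      rw [hma, hma, hmk] at h3
      exact ⟨(ih _).mp h1, (ih _).mp h2, (ih _).mp h3⟩
    · intro h q
      obtain ⟨a, rfl⟩ := qmk_surjective q
      obtain ⟨h1, h2, h3⟩ := h a
      refine ⟨?_, ?_, ?_⟩
      · rw [← qmk_mul, ← qmk_mul, hmk]; exact (ih _).mpr h1
      · rw [← qmk_mul, hma, hmk]; exact (ih _).mpr h2
      · rw [hma, hma, hmk]; exact (ih _).mpr h3

lemma starOp_shift {s s' z z' : B} (hz : z ∈ annSet B) (hz' : z' ∈ annSet B) :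
    starOp (s + z) (s' + z') = starOp s s' := by
  have e : (s + z) * (s' + z') = s * s' + z + z' := by
    rw [mul_add_ann hz', add_ann_mul hz]
  set T := starOp s s' with hT
  have hss : s * s' = s + T + s' := by
    rw [hT]
    show s * s' = s + (-s + s * s' - s') + s'
    rw [sub_eq_add_neg, add_assoc (-s), add_neg_cancel_left, add_assoc, neg_add_cancel, add_zero]
  simp only [starOp]
  rw [e, hss, sub_eq_add_neg, neg_add_rev, neg_add_rev]
  simp only [add_assoc]
  rw [neg_add_cancel_left, add_neg_cancel_left, ann_comm hz (-s'), add_neg_cancel_left,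
    ← ann_comm hz T, neg_add_cancel_left]

end Series

section Key

variable {B : Type*} [SkewBrace B]

lemma qmk_inv (a : B) : ((a⁻¹ : B) : B ⧸ annZ B) = (a : B ⧸ annZ B)⁻¹ := rfl

lemma qmk_starOp (u v : B) :
    ((starOp u v : B) : B ⧸ annZ B) = starOp (u : B ⧸ annZ B) (v : B ⧸ annZ B) := by
  simp only [starOp]
  rw [QuotientAddGroup.mk_sub, QuotientAddGroup.mk_add, QuotientAddGroup.mk_neg, qmk_mul]

end Key

universe u

lemma key : ∀ (n : ℕ) {B : Type u} [SkewBrace B] (S : Set B),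
    annSeries B n = Set.univ → IsSubSkewBrace S →
    (∀ b : B, ∃ s ∈ S, -s + b ∈ starSpan (Set.univ : Set B) Set.univ) → S = Set.univ := by
  intro n
  induction n with
  | zero =>
    intro B _ S h0 hS _
    ext b
    simp only [Set.mem_univ, iff_true]
    have hb : b ∈ annSeries B 0 := by rw [h0]; trivial
    have hb0 : b = 0 := hb
    rw [hb0]; exact hS.1
  | succ n ih =>
    intro B _ S hsucc hS hcov
    obtain ⟨h0, haddS, hnegS, hmulS, hinvS⟩ := hS
    have hQann : annSeries (B ⧸ annZ B) n = Set.univ := by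
      ext q
      simp only [Set.mem_univ, iff_true]
      obtain ⟨b, rfl⟩ := qmk_surjective q
      exact (transfer n b).mpr (by rw [hsucc]; trivial)
    have hS' : IsSubSkewBrace ((↑) '' S : Set (B ⧸ annZ B)) := by
      refine ⟨⟨0, h0, rfl⟩, ?_, ?_, ?_, ?_⟩
      · rintro _ ⟨a, ha, rfl⟩ _ ⟨b, hb, rfl⟩
        exact ⟨a + b, haddS a ha b hb, QuotientAddGroup.mk_add _ a b⟩
      · rintro _ ⟨a, ha, rfl⟩
        exact ⟨-a, hnegS a ha, QuotientAddGroup.mk_neg _ a⟩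
      · rintro _ ⟨a, ha, rfl⟩ _ ⟨b, hb, rfl⟩
        exact ⟨a * b, hmulS a ha b hb, qmk_mul a b⟩
      · rintro _ ⟨a, ha, rfl⟩
        exact ⟨a⁻¹, hinvS a ha, qmk_inv a⟩
    have hmap : ∀ c : B, c ∈ starSpan (Set.univ : Set B) Set.univ →
        ((c : B ⧸ annZ B)) ∈ starSpan (Set.univ : Set (B ⧸ annZ B)) Set.univ := by
      intro c hc
      change c ∈ AddSubgroup.closure _ at hc
      change _ ∈ AddSubgroup.closure _
      refine AddSubgroup.closure_induction ?_ ?_ ?_ ?_ hc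
      · rintro x ⟨u, -, v, -, rfl⟩
        rw [qmk_starOp]
        exact AddSubgroup.subset_closure ⟨_, trivial, _, trivial, rfl⟩
      · rw [QuotientAddGroup.mk_zero]; exact AddSubgroup.zero_mem _
      · intro x y _ _ px py
        rw [QuotientAddGroup.mk_add]; exact add_mem px py
      · intro x _ px
        rw [QuotientAddGroup.mk_neg]; exact neg_mem px
    have hcov' : ∀ q : B ⧸ annZ B, ∃ s' ∈ ((↑) '' S : Set (B ⧸ annZ B)),
        -s' + q ∈ starSpan (Set.univ : Set (B ⧸ annZ B)) Set.univ := by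
      intro q
      obtain ⟨b, rfl⟩ := qmk_surjective q
      obtain ⟨s, hsS, hc⟩ := hcov b
      refine ⟨(s : B ⧸ annZ B), ⟨s, hsS, rfl⟩, ?_⟩
      rw [← QuotientAddGroup.mk_neg, ← QuotientAddGroup.mk_add]
      exact hmap _ hc
    have himg : ((↑) '' S : Set (B ⧸ annZ B)) = Set.univ := ih _ hQann hS' hcov'
    have happrox : ∀ b : B, ∃ s ∈ S, -s + b ∈ annSet B := by
      intro b
      have hb : (b : B ⧸ annZ B) ∈ ((↑) '' S : Set (B ⧸ annZ B)) := by rw [himg]; trivial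
      obtain ⟨s, hsS, hsb⟩ := hb
      exact ⟨s, hsS, qmk_eq_iff.mp hsb⟩
    have hB2 : (starSpan (Set.univ : Set B) Set.univ : Set B) ⊆ S := by
      intro c hc
      change c ∈ AddSubgroup.closure _ at hc
      refine AddSubgroup.closure_induction ?_ h0 (fun x y _ _ px py => haddS x px y py)
        (fun x _ px => hnegS x px) hc
      rintro x ⟨u, -, v, -, rfl⟩
      obtain ⟨su, hsu, hzu⟩ := happrox u
      obtain ⟨sv, hsv, hzv⟩ := happrox v
      have hu : u = su + (-su + u) := by rw [← add_assoc, add_neg_cancel, zero_add]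
      have hv : v = sv + (-sv + v) := by rw [← add_assoc, add_neg_cancel, zero_add]
      rw [hu, hv, starOp_shift hzu hzv]
      show -su + su * sv - sv ∈ S
      rw [sub_eq_add_neg]
      exact haddS _ (haddS _ (hnegS _ hsu) _ (hmulS _ hsu _ hsv)) _ (hnegS _ hsv)
    ext b
    simp only [Set.mem_univ, iff_true]
    obtain ⟨s, hsS, hc⟩ := hcov b
    have hb : b = s + (-s + b) := by rw [← add_assoc, add_neg_cancel, zero_add]
    rw [hb]
    exact haddS s hsS _ (hB2 hc)


/-- Corollary 5.3: if `B` is annihilator nilpotent and `f : A → B` is a skew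
brace homomorphism, then `f` is surjective iff the induced map
`f̄ : A/A² → B/B²` is surjective; surjectivity of `f̄` is expressed as: every
`b ∈ B` is congruent to some `f a` modulo the ideal `B² = B * B`. -/
theorem stmt19 {A B : Type*} [SkewBrace A] [SkewBrace B]
    (hann : AnnNilpotent B)
    (f : A → B) (hadd : ∀ a b : A, f (a + b) = f a + f b)
    (hmul : ∀ a b : A, f (a * b) = f a * f b) :
    Function.Surjective f ↔
      ∀ b : B, ∃ a : A, -(f a) + b ∈ starSpan (Set.univ : Set B) Set.univ := by
  constructor
  · intro hs b
    obtain ⟨a, rfl⟩ := hs b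
    refine ⟨a, ?_⟩
    rw [neg_add_cancel]
    change _ ∈ AddSubgroup.closure _
    exact AddSubgroup.zero_mem _
  · intro hcov
    obtain ⟨n, hn⟩ := hann
    have hf0 : f 0 = 0 := by
      have h := hadd 0 0
      rw [add_zero] at h
      have h2 : f 0 + f 0 = f 0 + 0 := by rw [add_zero, ← h]
      exact add_left_cancel h2
    have hfneg : ∀ a, f (-a) = -f a := by
      intro a
      have h : f (-a) + f a = 0 := by rw [← hadd, neg_add_cancel, hf0]
      exact eq_neg_of_add_eq_zero_left h
    have hf1 : f 1 = 1 := by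
      have h := hmul 1 1
      rw [mul_one] at h
      have h2 : f 1 * f 1 = f 1 * 1 := by rw [mul_one, ← h]
      exact mul_left_cancel h2
    have hfinv : ∀ a, f a⁻¹ = (f a)⁻¹ := by
      intro a
      have h : f a⁻¹ * f a = 1 := by rw [← hmul, inv_mul_cancel, hf1]
      exact eq_inv_of_mul_eq_one_left h
    have hS : IsSubSkewBrace (Set.range f) := by
      refine ⟨⟨0, hf0⟩, ?_, ?_, ?_, ?_⟩
      · rintro _ ⟨a, rfl⟩ _ ⟨b, rfl⟩; exact ⟨a + b, hadd a b⟩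
      · rintro _ ⟨a, rfl⟩; exact ⟨-a, hfneg a⟩
      · rintro _ ⟨a, rfl⟩ _ ⟨b, rfl⟩; exact ⟨a * b, hmul a b⟩
      · rintro _ ⟨a, rfl⟩; exact ⟨a⁻¹, hfinv a⟩
    have hcov' : ∀ b : B, ∃ s ∈ Set.range f,
        -s + b ∈ starSpan (Set.univ : Set B) Set.univ := by
      intro b
      obtain ⟨a, ha⟩ := hcov b
      exact ⟨f a, ⟨a, rfl⟩, ha⟩
    have hr := key n (Set.range f) hn hS hcov'
    intro b
    have hb : b ∈ Set.range f := by rw [hr]; trivial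
    exact hb

end SkewBrace
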